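/- Let A be an N×N matrix such that deg sum(adj(I - A·z)) < deg det(I - A·z) (equivalently, s ≥ r in the notation above). Then deg sum(adj(I - A·z)·A) = deg det(I - A·z) - 1. -/

import Mathlib

/-!
Multiplying `adj(I - zA) (I - zA) = det(I - zA) I` out and summing all entries gives
`z · sum(adj(I - zA) A) = sum(adj(I - zA)) - N det(I - zA)`. Under the hypothesis the right side
has the degree of `det(I - zA)` (and `N ≠ 0`, as `det(I - zA)` is not constant), so `sum(adj(I - zA) A)` has one degree less.
-/

open Polynomial Matrix

/-- The sum of all the entries of a matrix. -/
def sumEntries {R : Type*} [AddCommMonoid R] {N : ℕ} (M : Matrix (Fin N) (Fin N) R) : R :=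
  ∑ i, ∑ j, M i j

/-- `det(I - A·z)`. -/
noncomputable def detIsubAz {N : ℕ} (A : Matrix (Fin N) (Fin N) ℚ) : ℚ[X] :=
  ((1 : Matrix (Fin N) (Fin N) ℚ[X]) - (X : ℚ[X]) • A.map C).det

/-- `sum(adj(I - A·z))`. -/
noncomputable def sumAdjIsubAz {N : ℕ} (A : Matrix (Fin N) (Fin N) ℚ) : ℚ[X] :=
  sumEntries (adjugate ((1 : Matrix (Fin N) (Fin N) ℚ[X]) - (X : ℚ[X]) • A.map C))

/-- `sum(adj(I - A·z)·A)`. -/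
noncomputable def sumAdjIsubAzA {N : ℕ} (A : Matrix (Fin N) (Fin N) ℚ) : ℚ[X] :=
  sumEntries (adjugate ((1 : Matrix (Fin N) (Fin N) ℚ[X]) - (X : ℚ[X]) • A.map C) * A.map C)

section SumEntries

variable {R : Type*} {N : ℕ}

lemma sumEntries_sub [AddCommGroup R] (M M' : Matrix (Fin N) (Fin N) R) :
    sumEntries (M - M') = sumEntries M - sumEntries M' := by
  simp only [sumEntries, Matrix.sub_apply, Finset.sum_sub_distrib]

lemma sumEntries_smul [NonUnitalNonAssocSemiring R] (c : R) (M : Matrix (Fin N) (Fin N) R) :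
    sumEntries (c • M) = c * sumEntries M := by
  simp only [sumEntries, Matrix.smul_apply, smul_eq_mul, Finset.mul_sum]

lemma sumEntries_one [AddCommMonoidWithOne R] :
    sumEntries (1 : Matrix (Fin N) (Fin N) R) = N := by
  simp [sumEntries, one_apply]

end SumEntries

section Adjugate

variable {R : Type*} [CommRing R] {N : ℕ}

lemma smul_adjugate_one_sub_smul_mul (t : R) (A : Matrix (Fin N) (Fin N) R) :
    t • (adjugate (1 - t • A) * A) = adjugate (1 - t • A) - (1 - t • A).det • 1 := by
  rw [← adjugate_mul (1 - t • A), Matrix.mul_sub, Matrix.mul_one, Matrix.mul_smul]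
  abel

lemma mul_sumEntries_adjugate_one_sub_smul_mul (t : R) (A : Matrix (Fin N) (Fin N) R) :
    t * sumEntries (adjugate (1 - t • A) * A) =
      sumEntries (adjugate (1 - t • A)) - N * (1 - t • A).det := by
  rw [← sumEntries_smul, smul_adjugate_one_sub_smul_mul, sumEntries_sub, sumEntries_smul,
    sumEntries_one, mul_comm]

end Adjugate

lemma natDegree_eq_sub_one_of_X_mul_eq_sub_C_mul {R : Type*} [Ring R] [NoZeroDivisors R]
    {f p q : R[X]} {c : R} (hc : c ≠ 0) (hpq : p.natDegree < q.natDegree)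
    (hf : X * f = p - C c * q) : f.natDegree = q.natDegree - 1 := by
  have : Nontrivial R := nontrivial_of_ne c 0 hc
  have hcq : (C c * q).natDegree = q.natDegree := natDegree_C_mul hc
  have hXf : (X * f).natDegree = q.natDegree := by
    rw [hf, natDegree_sub_eq_right_of_natDegree_lt (hcq ▸ hpq), hcq]
  have hf0 : f ≠ 0 := by
    rintro rfl
    rw [mul_zero, natDegree_zero] at hXf
    omega
  rw [natDegree_X_mul hf0] at hXf
  omega

/-- If `deg sum(adj(I - A·z)) < deg det(I - A·z)` then
`deg sum(adj(I - A·z)·A) = deg det(I - A·z) - 1`. -/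
theorem stmt8 {N : ℕ} (A : Matrix (Fin N) (Fin N) ℚ)
    (h : (sumAdjIsubAz A).natDegree < (detIsubAz A).natDegree) :
    (sumAdjIsubAzA A).natDegree = (detIsubAz A).natDegree - 1 := by
  have hN : N ≠ 0 := by
    rintro rfl
    simp [detIsubAz] at h
  refine natDegree_eq_sub_one_of_X_mul_eq_sub_C_mul (c := (N : ℚ)) (Nat.cast_ne_zero.mpr hN) h ?_
  rw [map_natCast]
  exact mul_sumEntries_adjugate_one_sub_smul_mul X (A.map C)
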